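/- There exists an absolute constant C > 0 such that for all z ∈ ℍ and all n with n ≥ max(4, 2|Re z|), |∫_{−n}^{n} (s̃ₓ(z) − z) dx| < C, where s̃ₓ(z) = x + √((z−x)² − 1). -/

import Mathlib

/-!
Write `w = z - x` and `s = √(w² - 1)`, so that the integrand is `s - w = -1/(w + s)`, which
behaves like `-1/(2w)` for large `|w|`. Adding `1/(2(w + i))`, whose denominator stays away from
`0` on `ℍ`, leaves a remainder bounded by `3/(1 + (x - Re z)²)`, with integral at most `3π`.
The added term integrates to `(log (z + i + n) - log (z + i - n))/2`: its imaginary part is at most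
`π`, and `n ≥ 2|Re z|` makes `|z + i + n|` and `|z + i - n|` comparable, which bounds the real part.
-/

open Complex MeasureTheory Filter

/-- Complex square root with the branch chosen in the closed upper half-plane. -/
noncomputable def csqrtH (w : ℂ) : ℂ :=
  if 0 ≤ (w ^ (1/2 : ℂ)).im then w ^ (1/2 : ℂ) else -(w ^ (1/2 : ℂ))

/-- The slit map at `x`: `s̃ₓ(z) = x + √((z-x)² - 1)`, branch mapping ℍ into ℍ. -/
noncomputable def slitAt (x : ℝ) (z : ℂ) : ℂ := x + csqrtH ((z - x) ^ 2 - 1)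

/-- The complex derivative of the slit map at `x`: `(z-x)/√((z-x)² - 1)`. -/
noncomputable def slitDerivAt (x : ℝ) (z : ℂ) : ℂ := (z - x) / csqrtH ((z - x) ^ 2 - 1)

lemma csqrtH_im_nonneg (u : ℂ) : 0 ≤ (csqrtH u).im := by
  unfold csqrtH
  split_ifs with h
  · exact h
  · rw [neg_im]; linarith

lemma csqrtH_sq (u : ℂ) : csqrtH u ^ 2 = u := by
  unfold csqrtH
  split_ifs <;> simp

lemma measurable_csqrtH : Measurable csqrtH := by
  have hm : Measurable fun u : ℂ => u ^ (1/2 : ℂ) := measurable_id.pow_const _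
  exact .ite (measurableSet_le measurable_const (measurable_im.comp hm)) hm hm.neg

section SquareRoot

variable {w s : ℂ}

/-- The branch condition `0 ≤ s.im` makes `s` point roughly along `w`, hence `‖w‖ ≤ ‖w + s‖`. -/
lemma re_mul_re_add_im_mul_im_nonneg_of_sq_eq (hw : 0 < w.im) (hs : 0 ≤ s.im)
    (hsq : s ^ 2 = w ^ 2 - 1) : 0 ≤ w.re * s.re + w.im * s.im := by
  have him : s.re * s.im = w.re * w.im := by
    have := congrArg im hsq
    simp only [pow_two, mul_im, sub_im, one_im] at this
    linarith
  rcases hs.eq_or_lt with hs0 | hs0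
  · have hre : w.re = 0 := by
      have : w.re * w.im = 0 := by rw [← him, ← hs0, mul_zero]
      exact (mul_eq_zero.mp this).resolve_right hw.ne'
    simp [hre, ← hs0]
  · refine nonneg_of_mul_nonneg_right ?_ hs0
    have : s.im * (w.re * s.re + w.im * s.im) = w.re ^ 2 * w.im + w.im * s.im ^ 2 := by
      linear_combination w.re * him
    rw [this]; positivity

lemma sq_norm_add_sq_norm_le_of_sq_eq (hw : 0 < w.im) (hs : 0 ≤ s.im)
    (hsq : s ^ 2 = w ^ 2 - 1) : ‖w‖ ^ 2 + ‖s‖ ^ 2 ≤ ‖w + s‖ ^ 2 := by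
  simp only [← normSq_eq_norm_sq, normSq_add, mul_re, conj_re, conj_im]
  nlinarith [re_mul_re_add_im_mul_im_nonneg_of_sq_eq hw hs hsq]

lemma one_le_norm_add_of_sq_eq (hw : 0 < w.im) (hs : 0 ≤ s.im) (hsq : s ^ 2 = w ^ 2 - 1) :
    1 ≤ ‖w + s‖ := by
  have hs2 : ‖(1 : ℂ)‖ - ‖w ^ 2‖ ≤ ‖s ^ 2‖ := hsq ▸ norm_sub_rev (w ^ 2) 1 ▸ norm_sub_norm_le _ _
  rw [norm_one, norm_pow, norm_pow] at hs2
  nlinarith [sq_norm_add_sq_norm_le_of_sq_eq hw hs hsq, norm_nonneg (w + s)]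

lemma norm_le_norm_add_of_sq_eq (hw : 0 < w.im) (hs : 0 ≤ s.im) (hsq : s ^ 2 = w ^ 2 - 1) :
    ‖w‖ ≤ ‖w + s‖ :=
  le_of_sq_le_sq ((le_add_of_nonneg_right (sq_nonneg _)).trans
    (sq_norm_add_sq_norm_le_of_sq_eq hw hs hsq)) (norm_nonneg _)

lemma sub_add_inv_add_I_div_two_eq_of_sq_eq (hw : 0 < w.im) (hs : 0 ≤ s.im)
    (hsq : s ^ 2 = w ^ 2 - 1) :
    s - w + (w + I)⁻¹ / 2 = (s - w - 2 * I) / (2 * (w + s) * (w + I)) := by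
  have hws : w + s ≠ 0 := by
    rw [← norm_pos_iff]; linarith [one_le_norm_add_of_sq_eq hw hs hsq]
  have hwI : w + I ≠ 0 := by
    intro h
    have := congrArg im h
    simp only [add_im, I_im, zero_im] at this
    linarith
  field_simp
  linear_combination (2 * w + 2 * I) * hsq

lemma norm_sub_add_inv_add_I_div_two_le_of_sq_eq (hw : 0 < w.im) (hs : 0 ≤ s.im)
    (hsq : s ^ 2 = w ^ 2 - 1) : ‖s - w + (w + I)⁻¹ / 2‖ ≤ 3 / (1 + ‖w‖ ^ 2) := by
  have hA₁ := one_le_norm_add_of_sq_eq hw hs hsq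
  have hA₂ := norm_le_norm_add_of_sq_eq hw hs hsq
  have hB : 1 + ‖w‖ ^ 2 ≤ ‖w + I‖ ^ 2 := by
    simp only [← normSq_eq_norm_sq, normSq_add, mul_re, conj_re, conj_im, I_re, I_im, normSq_I]
    linarith
  have hB₁ : 1 ≤ ‖w + I‖ := le_of_sq_le_sq (by nlinarith [sq_nonneg ‖w‖]) (norm_nonneg _)
  have hB₂ : ‖w‖ ≤ ‖w + I‖ := le_of_sq_le_sq (by linarith) (norm_nonneg _)
  have hsub : ‖s - w‖ * ‖w + s‖ = 1 := by
    rw [← norm_mul, show (s - w) * (w + s) = -1 by linear_combination hsq, norm_neg, norm_one]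
  have hnum : ‖s - w - 2 * I‖ ≤ 3 := by
    have : ‖s - w‖ ≤ 1 := by nlinarith [norm_nonneg (s - w)]
    calc ‖s - w - 2 * I‖ ≤ ‖s - w‖ + ‖2 * I‖ := norm_sub_le _ _
      _ ≤ 3 := by rw [norm_mul, norm_I, Complex.norm_two]; linarith
  have hden : 1 + ‖w‖ ^ 2 ≤ 2 * ‖w + s‖ * ‖w + I‖ := by
    nlinarith [mul_le_mul hA₁ hB₁ zero_le_one (by positivity),
      mul_le_mul hA₂ hB₂ (norm_nonneg _) (by positivity)]
  rw [sub_add_inv_add_I_div_two_eq_of_sq_eq hw hs hsq, norm_div, norm_mul, norm_mul,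
    Complex.norm_two]
  calc ‖s - w - 2 * I‖ / (2 * ‖w + s‖ * ‖w + I‖) ≤ 3 / (2 * ‖w + s‖ * ‖w + I‖) := by gcongr
    _ ≤ 3 / (1 + ‖w‖ ^ 2) := by gcongr

end SquareRoot

lemma Real.abs_log_sub_log_le {x y c : ℝ} (hx : 0 < x) (hy : 0 < y) (hxy : x ≤ c * y)
    (hyx : y ≤ c * x) : |Real.log x - Real.log y| ≤ Real.log c := by
  have hc : 0 < c := pos_of_mul_pos_left (hx.trans_le hxy) hy.le
  rw [abs_sub_le_iff]
  constructor
  · linarith [Real.log_le_log hx hxy, Real.log_mul hc.ne' hy.ne']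
  · linarith [Real.log_le_log hy hyx, Real.log_mul hc.ne' hx.ne']

lemma Complex.norm_log_sub_log_le {u v : ℂ} (hu : 0 ≤ u.im) (hv : 0 ≤ v.im) :
    ‖log u - log v‖ ≤ |Real.log ‖u‖ - Real.log ‖v‖| + Real.pi := by
  refine (norm_le_abs_re_add_abs_im _).trans (add_le_add (by rw [sub_re, log_re, log_re]) ?_)
  rw [sub_im, log_im, log_im, abs_sub_le_iff]
  constructor <;> linarith [arg_le_pi u, arg_le_pi v, arg_nonneg_iff.mpr hu, arg_nonneg_iff.mpr hv]

lemma continuous_inv_sub_ofReal {c : ℂ} (hc : c.im ≠ 0) : Continuous fun x : ℝ => (c - x)⁻¹ :=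
  (continuous_const.sub continuous_ofReal).inv₀ fun x h => hc (by simpa using congrArg im h)

lemma integral_inv_sub_ofReal {c : ℂ} (hc : c.im ≠ 0) (p q : ℝ) :
    ∫ x in p..q, (c - x)⁻¹ = log (c - p) - log (c - q) := by
  have hslit : ∀ x : ℝ, c - x ∈ slitPlane := fun x => by simp [mem_slitPlane_iff, hc]
  have hderiv : ∀ x ∈ Set.uIcc p q, HasDerivAt (fun y : ℝ => -log (c - y)) (c - x)⁻¹ x := by
    intro x _
    have := (((hasDerivAt_id (x : ℂ)).const_sub c).clog (hslit x)).neg.comp_ofReal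
    rwa [id, neg_div, neg_neg, one_div] at this
  rw [intervalIntegral.integral_eq_sub_of_hasDerivAt hderiv
    ((continuous_inv_sub_ofReal hc).intervalIntegrable p q)]
  ring

lemma norm_integral_inv_sub_ofReal_le {c : ℂ} (hc : 0 < c.im) {n : ℝ} (hn : 2 * |c.re| ≤ n) :
    ‖∫ x in (-n)..n, (c - x)⁻¹‖ ≤ Real.log 3 + Real.pi := by
  obtain ⟨ha₁, ha₂⟩ := abs_le.mp (show |c.re| ≤ n / 2 by linarith)
  have hpos : ∀ x : ℝ, 0 < ‖c - x‖ := fun x => norm_pos_iff.mpr fun h => by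
    simpa [hc.ne'] using congrArg im h
  have hnorm : ∀ x : ℝ, ‖c - x‖ ^ 2 = (c.re - x) ^ 2 + c.im ^ 2 := fun x => by
    rw [← normSq_eq_norm_sq, normSq_apply, sub_re, sub_im, ofReal_re, ofReal_im, sub_zero]
    ring
  have hle : ∀ x y : ℝ, |c.re - x| ≤ 3 * |c.re - y| → ‖c - x‖ ≤ 3 * ‖c - y‖ := by
    intro x y hxy
    refine le_of_sq_le_sq ?_ (by positivity)
    rw [mul_pow, hnorm, hnorm]
    nlinarith [sq_abs (c.re - x), sq_abs (c.re - y), abs_nonneg (c.re - x), sq_nonneg c.im]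
  rw [integral_inv_sub_ofReal hc.ne']
  refine (norm_log_sub_log_le (by simp [hc.le]) (by simp [hc.le])).trans (add_le_add_left ?_ _)
  refine Real.abs_log_sub_log_le (hpos _) (hpos _) (hle _ _ ?_) (hle _ _ ?_)
  · rw [abs_of_nonneg (by linarith), abs_of_nonpos (by linarith)]; linarith
  · rw [abs_of_nonpos (by linarith), abs_of_nonneg (by linarith)]; linarith

lemma measurable_slitAt (z : ℂ) : Measurable fun x : ℝ => slitAt x z :=
  measurable_ofReal.add (measurable_csqrtH.comp (by fun_prop))

lemma norm_slitAt_sub_add_inv_le {z : ℂ} (hz : 0 < z.im) (x : ℝ) :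
    ‖slitAt x z - z + (z - x + I)⁻¹ / 2‖ ≤ 3 * (1 + (x - z.re) ^ 2)⁻¹ := by
  have hw : 0 < (z - x).im := by simpa using hz
  have h := norm_sub_add_inv_add_I_div_two_le_of_sq_eq hw (csqrtH_im_nonneg _) (csqrtH_sq _)
  have hre : (x - z.re) ^ 2 ≤ ‖z - x‖ ^ 2 := by
    rw [← sq_abs, abs_sub_comm]
    simpa using pow_le_pow_left₀ (abs_nonneg _) (abs_re_le_norm (z - x)) 2
  calc ‖slitAt x z - z + (z - x + I)⁻¹ / 2‖
      = ‖csqrtH ((z - x) ^ 2 - 1) - (z - x) + (z - x + I)⁻¹ / 2‖ := by rw [slitAt]; ring_nf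
    _ ≤ 3 / (1 + ‖z - x‖ ^ 2) := h
    _ ≤ 3 * (1 + (x - z.re) ^ 2)⁻¹ := by rw [← div_eq_mul_inv]; gcongr

lemma abs_integral_inv_one_add_sq_sub_le_pi (a p q : ℝ) :
    |∫ x in p..q, (1 + (x - a) ^ 2)⁻¹| ≤ Real.pi := by
  rw [intervalIntegral.integral_comp_sub_right (fun x => (1 + x ^ 2)⁻¹), integral_inv_one_add_sq,
    abs_le]
  constructor <;> linarith [Real.arctan_lt_pi_div_two (q - a), Real.arctan_lt_pi_div_two (p - a),
    Real.neg_pi_div_two_lt_arctan (q - a), Real.neg_pi_div_two_lt_arctan (p - a)]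

lemma continuous_three_mul_inv_one_add_sq_sub (a : ℝ) :
    Continuous fun x : ℝ => 3 * (1 + (x - a) ^ 2)⁻¹ :=
  continuous_const.mul ((by fun_prop : Continuous fun x : ℝ => 1 + (x - a) ^ 2).inv₀
    fun x => by positivity)

lemma intervalIntegrable_slitAt_sub_add_inv {z : ℂ} (hz : 0 < z.im) (p q : ℝ) :
    IntervalIntegrable (fun x : ℝ => slitAt x z - z + (z - x + I)⁻¹ / 2) volume p q := by
  refine ((continuous_three_mul_inv_one_add_sq_sub z.re).intervalIntegrable p q).mono_fun' ?_
    (ae_of_all _ (norm_slitAt_sub_add_inv_le hz))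
  refine Measurable.aestronglyMeasurable ?_
  exact ((measurable_slitAt z).sub_const z).add (Measurable.div_const (by fun_prop) _)

lemma norm_integral_slitAt_sub_add_inv_le {z : ℂ} (hz : 0 < z.im) (p q : ℝ) :
    ‖∫ x in p..q, (slitAt x z - z + (z - x + I)⁻¹ / 2)‖ ≤ 3 * Real.pi := by
  refine (intervalIntegral.norm_integral_le_abs_of_norm_le
    (ae_of_all _ fun x => norm_slitAt_sub_add_inv_le hz x)
    ((continuous_three_mul_inv_one_add_sq_sub z.re).intervalIntegrable p q)).trans ?_
  rw [intervalIntegral.integral_const_mul, abs_mul, abs_of_pos three_pos]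
  gcongr
  exact abs_integral_inv_one_add_sq_sub_le_pi _ _ _

/-- `|∫_{-n}^{n} (s̃ₓ(z) - z) dx| < C` whenever `n ≥ max(4, 2|Re z|)`. -/
theorem stmt_5 :
    ∃ C > (0:ℝ), ∀ z : ℂ, 0 < z.im → ∀ n : ℝ, max 4 (2 * |z.re|) ≤ n →
      ‖∫ x in (-n)..n, (slitAt x z - z)‖ < C := by
  refine ⟨20, by norm_num, fun z hz n hn => ?_⟩
  have hzI : 0 < (z + I).im := by simpa using hz.trans (lt_add_one _)
  have hcorr := intervalIntegrable_slitAt_sub_add_inv hz (-n) n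
  have hinv := ((continuous_inv_sub_ofReal hzI.ne').div_const 2).intervalIntegrable
    (μ := volume) (-n) n
  have hlog := norm_integral_inv_sub_ofReal_le hzI (n := n) (by simpa using le_of_max_le_right hn)
  have hlog3 : Real.log 3 ≤ 2 := by linarith [Real.log_le_sub_one_of_pos (by norm_num : (0:ℝ) < 3)]
  calc ‖∫ x in (-n)..n, (slitAt x z - z)‖
      = ‖(∫ x in (-n)..n, (slitAt x z - z + (z - x + I)⁻¹ / 2))
          - (∫ x in (-n)..n, (z + I - x)⁻¹) / 2‖ := by
        rw [← intervalIntegral.integral_div, ← intervalIntegral.integral_sub hcorr hinv]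
        congr 2 with x
        ring
    _ ≤ 3 * Real.pi + (Real.log 3 + Real.pi) / 2 := by
        refine (norm_sub_le _ _).trans (add_le_add (norm_integral_slitAt_sub_add_inv_le hz _ _) ?_)
        rw [norm_div, Complex.norm_two]
        gcongr
    _ < 20 := by linarith [Real.pi_lt_four]
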